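/- Two based finite trees Λ and Λ' are isomorphic as based graphs if and only if their barycentric subdivisions sd Λ and sd Λ', regarded as based categories (posets), are equivalent as based categories. -/

import Mathlib

/-- The barycentric subdivision of a graph `G`, as a partially ordered set (hence a category):
its elements are the vertices of `G` together with a barycenter for each edge, and the barycenter
of an edge `{u,v}` lies below `u` and below `v`. -/
def Sd {V : Type} (G : SimpleGraph V) : Type := G.edgeSet ⊕ V

instance {V : Type} (G : SimpleGraph V) : PartialOrder (Sd G) where
  le x y := x = y ∨ ∃ (e : G.edgeSet) (v : V), x = Sum.inl e ∧ y = Sum.inr v ∧ v ∈ (e : Sym2 V)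
  le_refl x := Or.inl rfl
  le_trans x y z h₁ h₂ := by
    rcases h₁ with rfl | ⟨e, v, rfl, rfl, hv⟩
    · exact h₂
    · rcases h₂ with rfl | ⟨e', v', h, _, _⟩
      · exact Or.inr ⟨e, v, rfl, rfl, hv⟩
      · exact absurd h (by simp)
  le_antisymm x y h₁ h₂ := by
    rcases h₁ with rfl | ⟨e, v, rfl, rfl, hv⟩
    · rfl
    · rcases h₂ with h | ⟨e', v', h, h', _⟩
      · exact h.symm
      · exact absurd h' (by simp)

/-! The vertices of a graph `G` are exactly the maximal elements of `sd G`, and two distinct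
vertices are adjacent exactly when they have a common strict lower bound (the barycenter of the
edge joining them). Both properties are order-theoretic, so an order isomorphism
`sd G ≃o sd G'` restricts to a graph isomorphism `G ≃g G'`; conversely a graph isomorphism acts
on vertices and edges compatibly with incidence. Finally, equivalences between poset categories
are the same as order isomorphisms. -/

theorem SimpleGraph.Iso.mem_mapEdgeSet_iff {V W : Type*} {G : SimpleGraph V}
    {G' : SimpleGraph W} (f : G ≃g G') {e : G.edgeSet} {v : V} :
    f v ∈ (f.mapEdgeSet e : Sym2 W) ↔ v ∈ (e : Sym2 V) := by
  change f v ∈ Sym2.map f e ↔ _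
  simp [Sym2.mem_map, f.injective.eq_iff]

namespace Sd

variable {V V' : Type} {G : SimpleGraph V} {G' : SimpleGraph V'}

abbrev barycenter (e : G.edgeSet) : Sd G := Sum.inl e

abbrev vertex (v : V) : Sd G := Sum.inr v

@[simp]
theorem barycenter_inj {e e' : G.edgeSet} : barycenter e = barycenter e' ↔ e = e' :=
  Sum.inl_injective.eq_iff

@[simp]
theorem vertex_inj {v w : V} : (vertex v : Sd G) = vertex w ↔ v = w :=
  Sum.inr_injective.eq_iff

@[simp]
theorem barycenter_ne_vertex {e : G.edgeSet} {v : V} : barycenter e ≠ vertex v :=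
  Sum.inl_ne_inr

theorem le_def {x y : Sd G} : x ≤ y ↔
    x = y ∨ ∃ (e : G.edgeSet) (v : V), x = barycenter e ∧ y = vertex v ∧ v ∈ (e : Sym2 V) :=
  Iff.rfl

@[simp]
theorem barycenter_le_barycenter_iff {e e' : G.edgeSet} :
    barycenter e ≤ barycenter e' ↔ e = e' := by
  rw [le_def]; simp

@[simp]
theorem barycenter_le_vertex_iff {e : G.edgeSet} {v : V} :
    barycenter e ≤ vertex v ↔ v ∈ (e : Sym2 V) := by
  rw [le_def]; simp

@[simp]
theorem not_vertex_le_barycenter {v : V} {e : G.edgeSet} : ¬ vertex v ≤ barycenter e := by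
  rw [le_def]; simp

@[simp]
theorem vertex_le_iff {v : V} {y : Sd G} : vertex v ≤ y ↔ y = vertex v := by
  rw [le_def]; simp [eq_comm]

theorem isMax_iff_isRight {x : Sd G} : IsMax x ↔ x.isRight := by
  rcases x with e | v
  · simp only [Sum.isRight_inl, Bool.false_eq_true, iff_false]
    intro hmax
    exact not_vertex_le_barycenter (hmax (barycenter_le_vertex_iff.2 (Sym2.out_fst_mem e.1)))
  · simp only [Sum.isRight_inr, iff_true]
    intro y hy
    rw [vertex_le_iff.1 hy]

theorem adj_iff_exists_lt {u w : V} :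
    G.Adj u w ↔ u ≠ w ∧ ∃ x : Sd G, x < vertex u ∧ x < vertex w := by
  constructor
  · intro h
    have hlt (v : V) (hv : v ∈ s(u, w)) : barycenter ⟨s(u, w), h⟩ < vertex v :=
      lt_of_le_of_ne (barycenter_le_vertex_iff.2 hv) barycenter_ne_vertex
    exact ⟨h.ne, _, hlt u (Sym2.mem_mk_left u w), hlt w (Sym2.mem_mk_right u w)⟩
  · rintro ⟨hne, e | v, hu, hw⟩
    · have he : (e : Sym2 V) = s(u, w) :=
        (Sym2.mem_and_mem_iff hne).1
          ⟨barycenter_le_vertex_iff.1 hu.le, barycenter_le_vertex_iff.1 hw.le⟩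
      exact G.mem_edgeSet.1 (he ▸ e.2)
    · exact absurd (vertex_le_iff.1 hu.le) hu.ne'

def congr (f : G ≃g G') : Sd G ≃o Sd G' where
  toEquiv := Equiv.sumCongr f.mapEdgeSet f.toEquiv
  map_rel_iff' := by
    rintro (e | v) (e' | v')
    · change barycenter (f.mapEdgeSet e) ≤ barycenter (f.mapEdgeSet e') ↔
        barycenter e ≤ barycenter e'
      rw [barycenter_le_barycenter_iff, barycenter_le_barycenter_iff,
        f.mapEdgeSet.injective.eq_iff]
    · change barycenter (f.mapEdgeSet e) ≤ vertex (f v') ↔ barycenter e ≤ vertex v'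
      rw [barycenter_le_vertex_iff, barycenter_le_vertex_iff, f.mem_mapEdgeSet_iff]
    · exact iff_of_false not_vertex_le_barycenter not_vertex_le_barycenter
    · change vertex (f v) ≤ vertex (f v') ↔ vertex v ≤ vertex v'
      rw [vertex_le_iff, vertex_le_iff, vertex_inj, vertex_inj, f.injective.eq_iff]

def vertexMap (φ : Sd G ≃o Sd G') (v : V) : V' :=
  (φ (vertex v)).getRight (isMax_iff_isRight.1 (φ.isMax_apply.2 (isMax_iff_isRight.2 rfl)))

theorem vertex_vertexMap (φ : Sd G ≃o Sd G') (v : V) :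
    vertex (vertexMap φ v) = φ (vertex v) :=
  Sum.inr_getRight _ _

theorem vertexMap_injective (φ : Sd G ≃o Sd G') : Function.Injective (vertexMap φ) :=
  fun u w h => vertex_inj.1 (φ.injective (by rw [← vertex_vertexMap, ← vertex_vertexMap, h]))

def vertexEquiv (φ : Sd G ≃o Sd G') : V ≃ V' where
  toFun := vertexMap φ
  invFun := vertexMap φ.symm
  left_inv v := vertex_inj.1 (by
    rw [vertex_vertexMap, vertex_vertexMap, OrderIso.symm_apply_apply])
  right_inv v := vertex_inj.1 (by
    rw [vertex_vertexMap, vertex_vertexMap, OrderIso.apply_symm_apply])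

def graphIso (φ : Sd G ≃o Sd G') : G ≃g G' where
  toEquiv := vertexEquiv φ
  map_rel_iff' {u w} := by
    change G'.Adj (vertexMap φ u) (vertexMap φ w) ↔ G.Adj u w
    rw [adj_iff_exists_lt, adj_iff_exists_lt, vertex_vertexMap, vertex_vertexMap,
      φ.surjective.exists]
    simp only [φ.lt_iff_lt, ne_eq, (vertexMap_injective φ).eq_iff]

theorem vertex_graphIso (φ : Sd G ≃o Sd G') (v : V) :
    vertex (graphIso φ v) = φ (vertex v) :=
  vertex_vertexMap φ v

end Sd

theorem stmt14_general {V V' : Type}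
    (Λ : SimpleGraph V) (Λ' : SimpleGraph V')
    (b : V) (b' : V') :
    (∃ e : Λ ≃g Λ', e b = b') ↔
      ∃ E : CategoryTheory.Equivalence (Sd Λ) (Sd Λ'),
        E.functor.obj (Sum.inr b) = Sum.inr b' := by
  constructor
  · rintro ⟨f, rfl⟩
    exact ⟨(Sd.congr f).equivalence, rfl⟩
  · rintro ⟨E, hE⟩
    refine ⟨Sd.graphIso E.toOrderIso, (Sd.vertex_inj (G := Λ')).1 ?_⟩
    rwa [Sd.vertex_graphIso, CategoryTheory.Equivalence.toOrderIso_apply]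

/-- Two based finite trees `Λ` and `Λ'` are isomorphic as based graphs if and
only if their barycentric subdivisions `sd Λ` and `sd Λ'`, regarded as based categories (posets),
are equivalent as based categories (an equivalence of categories whose functor sends the base
object to the base object). -/
theorem stmt14 {V V' : Type} [Fintype V] [Fintype V']
    (Λ : SimpleGraph V) (Λ' : SimpleGraph V')
    (hΛ : Λ.IsTree) (hΛ' : Λ'.IsTree) (b : V) (b' : V') :
    (∃ e : Λ ≃g Λ', e b = b') ↔
      ∃ E : CategoryTheory.Equivalence (Sd Λ) (Sd Λ'),
        E.functor.obj (Sum.inr b) = Sum.inr b' :=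
  stmt14_general Λ Λ' b b'
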